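/- arXiv:2406.02001 — 2 statements merged into one kernel-verified Lean document; each statement's English description precedes it below -/
import Mathlib

section
/- Let σ_X², σ_N² > 0 and ρ ∈ (-1,1). Define Δ = σ_X²+σ_N², Δ₂ = Δ² + (σ_X²+ρσ_N²)². Then sup over σ_X², σ_N² > 0 and ρ ∈ (-1,1) of (1/2)log₂(Δ₂/Δ²) equals 1/2. Equivalently, the infimum of Δ²/Δ₂ over this domain is 1/2. -/
open Real Filter Set

private lemma key_lt {σX σN ρ : ℝ} (h1 : 0 < σX) (h2 : 0 < σN) (h3 : -1 < ρ)
    (h4 : ρ < 1) : (σX + ρ*σN)^2 < (σX + σN)^2 := by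
  nlinarith [mul_pos (mul_pos h2 (by linarith : (0:ℝ) < 1 - ρ))
    (by nlinarith : (0:ℝ) < 2*σX + σN*(1+ρ))]

private lemma tendsto_f :
    Tendsto (fun ρ : ℝ => (1/2 : ℝ) * Real.logb 2 ((4 + (1+ρ)^2)/4)) (nhdsWithin 1 (Iio 1))
      (nhds (1/2)) := by
  have hc : ContinuousAt (fun ρ : ℝ => (1/2 : ℝ) * Real.logb 2 ((4 + (1+ρ)^2)/4)) 1 := by
    have h1 : ContinuousAt (fun ρ : ℝ => (4 + (1+ρ)^2)/4) 1 := by fun_prop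
    have h2 : ContinuousAt (Real.logb 2) ((4 + (1+(1:ℝ))^2)/4) :=
      Real.continuousAt_logb (by norm_num)
    have h3 : ContinuousAt (fun ρ : ℝ => Real.logb 2 ((4 + (1+ρ)^2)/4)) 1 :=
      ContinuousAt.comp (x := (1:ℝ)) (g := Real.logb 2) h2 h1
    exact (continuousAt_const).mul h3
  have := hc.tendsto.mono_left (nhdsWithin_le_nhds (s := Iio (1:ℝ)))
  have h4 : ((4:ℝ) + (1+1)^2)/4 = 2 := by norm_num
  rw [h4, Real.logb_self_eq_one (by norm_num)] at this
  simpa using this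

private lemma tendsto_g :
    Tendsto (fun ρ : ℝ => (4:ℝ) / (4 + (1+ρ)^2)) (nhdsWithin 1 (Iio 1)) (nhds (1/2)) := by
  have hc : ContinuousAt (fun ρ : ℝ => (4:ℝ) / (4 + (1+ρ)^2)) 1 := by
    apply ContinuousAt.div
    · fun_prop
    · fun_prop
    · norm_num
  have := hc.tendsto.mono_left (nhdsWithin_le_nhds (s := Iio (1:ℝ)))
  have h4 : (4:ℝ) / (4 + (1+1)^2) = 1/2 := by norm_num
  rwa [h4] at this

/-- The supremum over σ_X², σ_N² > 0 and ρ ∈ (-1,1) of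
(1/2)log₂(Δ₂/Δ²) equals 1/2; equivalently the infimum of Δ²/Δ₂ is 1/2. -/
theorem stmt2 :
    sSup {x : ℝ | ∃ σX σN ρ : ℝ, 0 < σX ∧ 0 < σN ∧ ρ ∈ Set.Ioo (-1 : ℝ) 1 ∧
        x = (1/2 : ℝ) * Real.logb 2 (((σX + σN)^2 + (σX + ρ*σN)^2) / (σX + σN)^2)}
      = 1/2 ∧
    sInf {x : ℝ | ∃ σX σN ρ : ℝ, 0 < σX ∧ 0 < σN ∧ ρ ∈ Set.Ioo (-1 : ℝ) 1 ∧
        x = (σX + σN)^2 / ((σX + σN)^2 + (σX + ρ*σN)^2)}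
      = 1/2 := by
  constructor
  · apply IsLUB.csSup_eq
    · constructor
      · rintro x ⟨σX, σN, ρ, h1, h2, ⟨h3, h4⟩, rfl⟩
        have hA : (0:ℝ) < (σX + σN)^2 := by positivity
        have hB : (σX + ρ*σN)^2 < (σX + σN)^2 := key_lt h1 h2 h3 h4
        have harg : ((σX + σN)^2 + (σX + ρ*σN)^2) / (σX + σN)^2 ≤ 2 := by
          rw [div_le_iff₀ hA]; nlinarith
        have hpos : (0:ℝ) < ((σX + σN)^2 + (σX + ρ*σN)^2) / (σX + σN)^2 := by positivity
        have := Real.logb_le_logb_of_le (b := 2) (by norm_num) hpos harg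
        rw [Real.logb_self_eq_one (by norm_num)] at this
        linarith
      · intro b hb
        refine le_of_tendsto tendsto_f ?_
        filter_upwards [Ioo_mem_nhdsLT_of_mem (by constructor <;> norm_num : (1:ℝ) ∈ Ioc (-1:ℝ) 1)] with ρ hρ
        apply hb
        exact ⟨1, 1, ρ, one_pos, one_pos, hρ, by norm_num⟩
    · exact ⟨(1/2 : ℝ) * Real.logb 2 (((1 + 1)^2 + (1 + 0*1)^2) / (1 + 1)^2),
        1, 1, 0, one_pos, one_pos, ⟨by norm_num, by norm_num⟩, rfl⟩
  · apply IsGLB.csInf_eq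
    · constructor
      · rintro x ⟨σX, σN, ρ, h1, h2, ⟨h3, h4⟩, rfl⟩
        have hA : (0:ℝ) < (σX + σN)^2 := by positivity
        have hB : (σX + ρ*σN)^2 < (σX + σN)^2 := key_lt h1 h2 h3 h4
        rw [le_div_iff₀ (by positivity)]
        nlinarith
      · intro b hb
        refine ge_of_tendsto tendsto_g ?_
        filter_upwards [Ioo_mem_nhdsLT_of_mem (by constructor <;> norm_num : (1:ℝ) ∈ Ioc (-1:ℝ) 1)] with ρ hρ
        apply hb
        exact ⟨1, 1, ρ, one_pos, one_pos, hρ, by norm_num⟩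
    · exact ⟨(1 + 1)^2 / ((1 + 1)^2 + (1 + 0*1)^2),
        1, 1, 0, one_pos, one_pos, ⟨by norm_num, by norm_num⟩, rfl⟩
end

section
/- Let σ_X² > 0 and ρ ∈ (-1,1) be fixed. With R₂ and R₃ defined as in the symmetric Gaussian model, lim_{σ_N²→0} R₂/R₃ = 1 and lim_{σ_N²→0} R₂ = lim_{σ_N²→0} R₃ = ∞. -/
open Filter Real

/-- For fixed σ_X² > 0 and ρ ∈ (-1,1),
lim_{σ_N²→0⁺} R₂/R₃ = 1 and R₂, R₃ → ∞ as σ_N² → 0⁺. -/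
theorem stmt10 (σX ρ : ℝ) (hX : 0 < σX) (hρ : ρ ∈ Set.Ioo (-1 : ℝ) 1) :
    Filter.Tendsto
      (fun σN : ℝ =>
        ((1/2 : ℝ) * Real.logb 2 ((σX + σN)^2 / ((σX + σN)^2 - (σX + ρ*σN)^2)))
        / ((1/2 : ℝ) * Real.logb 2 ((σX + σN)^2 / ((σX + σN)^2 - (σX + ρ*σN)^2))
          + (1/2 : ℝ) * Real.logb 2 ((σX + σN)^2 / ((σX + σN)^2 + (σX + ρ*σN)^2))))
      (nhdsWithin 0 (Set.Ioi 0)) (nhds 1) ∧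
    Filter.Tendsto
      (fun σN : ℝ => (1/2 : ℝ) * Real.logb 2
        ((σX + σN)^2 / ((σX + σN)^2 - (σX + ρ*σN)^2)))
      (nhdsWithin 0 (Set.Ioi 0)) Filter.atTop ∧
    Filter.Tendsto
      (fun σN : ℝ =>
        (1/2 : ℝ) * Real.logb 2 ((σX + σN)^2 / ((σX + σN)^2 - (σX + ρ*σN)^2))
        + (1/2 : ℝ) * Real.logb 2 ((σX + σN)^2 / ((σX + σN)^2 + (σX + ρ*σN)^2)))
      (nhdsWithin 0 (Set.Ioi 0)) Filter.atTop := by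
  obtain ⟨hρ1, hρ2⟩ := hρ
  set l : Filter ℝ := nhdsWithin 0 (Set.Ioi 0) with hl
  set f : ℝ → ℝ := fun σN =>
    (1/2 : ℝ) * Real.logb 2 ((σX + σN)^2 / ((σX + σN)^2 - (σX + ρ*σN)^2)) with hfdef
  set g : ℝ → ℝ := fun σN =>
    (1/2 : ℝ) * Real.logb 2 ((σX + σN)^2 / ((σX + σN)^2 + (σX + ρ*σN)^2)) with hgdef
  -- A tends to σX^2
  have hA : Tendsto (fun σN : ℝ => (σX + σN)^2) l (nhds (σX^2)) := by
    have : ContinuousAt (fun σN : ℝ => (σX + σN)^2) 0 := by fun_prop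
    simpa using this.continuousWithinAt.tendsto
  -- B tends to 0 within (0,∞)
  have hBpos : ∀ x ∈ Set.Ioi (0:ℝ), 0 < (σX + x)^2 - (σX + ρ*x)^2 := by
    intro x hx
    have hx : 0 < x := hx
    have h1 : (σX + x)^2 - (σX + ρ*x)^2 = ((1-ρ)*x) * (2*σX + (1+ρ)*x) := by ring
    rw [h1]
    have : 0 < (1-ρ)*x := mul_pos (by linarith) hx
    have : 0 < 2*σX + (1+ρ)*x := by nlinarith
    positivity
  have hB : Tendsto (fun σN : ℝ => (σX + σN)^2 - (σX + ρ*σN)^2) l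
      (nhdsWithin 0 (Set.Ioi 0)) := by
    apply tendsto_nhdsWithin_of_tendsto_nhds_of_eventually_within
    · have : ContinuousAt (fun σN : ℝ => (σX + σN)^2 - (σX + ρ*σN)^2) 0 := by fun_prop
      simpa using this.continuousWithinAt.tendsto
    · exact eventually_nhdsWithin_of_forall hBpos
  -- A/B tends to atTop
  have hAB : Tendsto (fun σN : ℝ => (σX + σN)^2 / ((σX + σN)^2 - (σX + ρ*σN)^2)) l
      atTop := by
    have hinv : Tendsto (fun σN : ℝ => ((σX + σN)^2 - (σX + ρ*σN)^2)⁻¹) l atTop :=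
      tendsto_inv_nhdsGT_zero.comp hB
    have := Filter.Tendsto.pos_mul_atTop (by positivity : (0:ℝ) < σX^2) hA hinv
    simpa [div_eq_mul_inv] using this
  -- f tends to atTop
  have hf : Tendsto f l atTop := by
    have hlog := (Real.tendsto_logb_atTop (by norm_num : (1:ℝ) < 2)).comp hAB
    exact (tendsto_const_mul_atTop_of_pos (by norm_num : (0:ℝ) < 1/2)).2 hlog
  -- g tends to a constant
  have hC : Tendsto (fun σN : ℝ => (σX + σN)^2 / ((σX + σN)^2 + (σX + ρ*σN)^2)) l
      (nhds (σX^2 / (σX^2 + σX^2))) := by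
    have : ContinuousAt (fun σN : ℝ => (σX + σN)^2 / ((σX + σN)^2 + (σX + ρ*σN)^2)) 0 := by
      apply ContinuousAt.div
      · fun_prop
      · fun_prop
      · simp; positivity
    simpa using this.continuousWithinAt.tendsto
  have hg : Tendsto g l (nhds ((1/2 : ℝ) * Real.logb 2 (σX^2 / (σX^2 + σX^2)))) := by
    have hc : ContinuousAt (fun y : ℝ => (1/2 : ℝ) * Real.logb 2 y)
        (σX^2 / (σX^2 + σX^2)) := by
      exact (Real.continuousAt_logb (by positivity)).const_mul (1/2 : ℝ)
    exact hc.tendsto.comp hC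
  -- sum tends to atTop
  have hfg : Tendsto (fun x => f x + g x) l atTop := hf.atTop_add hg
  refine ⟨?_, hf, hfg⟩
  -- ratio f/(f+g) → 1
  have hq : Tendsto (fun x => g x / f x) l (nhds 0) := hg.div_atTop hf
  have h1 : Tendsto (fun x => 1 / (1 + g x / f x)) l (nhds 1) := by
    have : Tendsto (fun x => 1 + g x / f x) l (nhds 1) := by
      simpa using tendsto_const_nhds.add hq
    simpa using (this.inv₀ one_ne_zero)
  refine h1.congr' ?_
  filter_upwards [hf.eventually_ge_atTop 1, hfg.eventually_ge_atTop 1] with x hx hx2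
  have h3 : f x ≠ 0 := by linarith
  have h4 : f x + g x ≠ 0 := by linarith
  show 1 / (1 + g x / f x) = f x / (f x + g x)
  field_simp
end
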